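/- Fix θ ∈ ℝ^d and let g^1, g^2, ... be ℝ^d-valued random vectors with E[g^s | F_{s−1}] = ∇f(θ) and E[‖g^s − ∇f(θ)‖² | F_{s−1}] ≤ σ². Let b ≤ b_max be a bounded stopping time, α = b, and g = (1/b)Σ_{s=1}^b g^s. Then E[α² ‖g‖²] ≤ 2 b_max E[α ‖∇f(θ)‖²] + 2σ² E[b]. -/

import Mathlib

/-!
Write `X s = g^{s+1} - ∇f(θ)` and `S = ∑_{s < b} X s`, so that `b • g = S + b • ∇f(θ)` and hence
`b² ‖g‖² ≤ 2 ‖S‖² + 2 b_max · b ‖∇f(θ)‖²` pointwise. Since `b ≤ b_max`, `S` is the finite sum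
`∑_{s < b_max} 1_{s < b} X s`, and `{s < b}` is `ℱ s`-measurable. The summands are orthogonal in
`L²`: for `s < t`, the factor `1_{t < b} 1_{s < b} X s` is `ℱ t`-measurable while `X t` has zero
conditional mean given `ℱ t`. Each summand has second moment `∫_{s < b} ‖X s‖² ≤ σ² P(s < b)`,
and `∑_{s < b_max} P(s < b) = E[b]`, which gives `E ‖S‖² ≤ σ² E[b]`.
-/

open MeasureTheory ProbabilityTheory Finset
open scoped RealInnerProductSpace

theorem Finset.sum_range_eq_sum_range_ite {M : Type*} [AddCommMonoid M] (f : ℕ → M) {n N : ℕ}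
    (hnN : n ≤ N) : ∑ s ∈ range n, f s = ∑ s ∈ range N, if s < n then f s else 0 := by
  rw [← sum_filter]
  congr 1
  ext s
  simp only [mem_filter, mem_range]
  omega

theorem norm_add_sq_le_two_mul {E : Type*} [SeminormedAddCommGroup E] (a b : E) :
    ‖a + b‖ ^ 2 ≤ 2 * ‖a‖ ^ 2 + 2 * ‖b‖ ^ 2 := by
  nlinarith [pow_le_pow_left₀ (norm_nonneg _) (norm_add_le a b) 2, add_sq_le (a := ‖a‖) (b := ‖b‖)]

theorem sq_mul_norm_sq_average_le {E : Type*} [NormedAddCommGroup E] [NormedSpace ℝ E]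
    (y : ℕ → E) (c : E) {n N : ℕ} (hnN : n ≤ N) :
    (n : ℝ) ^ 2 * ‖(n : ℝ)⁻¹ • ∑ s ∈ range n, y s‖ ^ 2
      ≤ 2 * ‖∑ s ∈ range n, (y s - c)‖ ^ 2 + 2 * N * (n * ‖c‖ ^ 2) := by
  have hscale : (n : ℝ) ^ 2 * ‖(n : ℝ)⁻¹ • ∑ s ∈ range n, y s‖ ^ 2
      = ‖∑ s ∈ range n, (y s - c) + (n : ℝ) • c‖ ^ 2 := by
    rw [sum_sub_distrib, sum_const, card_range, ← Nat.cast_smul_eq_nsmul ℝ, sub_add_cancel]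
    rcases eq_or_ne n 0 with rfl | hn
    · simp
    rw [norm_smul, mul_pow, ← mul_assoc, ← mul_pow, norm_inv, Real.norm_natCast,
      mul_inv_cancel₀ (Nat.cast_ne_zero.2 hn), one_pow, one_mul]
  have hnc : ‖(n : ℝ) • c‖ ^ 2 ≤ N * (n * ‖c‖ ^ 2) := by
    rw [norm_smul, mul_pow, Real.norm_natCast, sq, mul_assoc]
    gcongr
  calc _ = ‖∑ s ∈ range n, (y s - c) + (n : ℝ) • c‖ ^ 2 := hscale
    _ ≤ _ := (norm_add_sq_le_two_mul _ _).trans (by linarith)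

namespace MeasureTheory

variable {Ω : Type*} {m m0 : MeasurableSpace Ω} {μ : Measure Ω}

theorem sum_range_stopped_eq_sum_indicator {M : Type*} [AddCommMonoid M] {τ : Ω → ℕ} {N : ℕ}
    (hτN : ∀ ω, τ ω ≤ N) (X : ℕ → Ω → M) (ω : Ω) :
    ∑ s ∈ range (τ ω), X s ω = ∑ s ∈ range N, {ω | s < τ ω}.indicator (X s) ω := by
  simp only [Set.indicator_apply, Set.mem_ofPred_eq]
  exact sum_range_eq_sum_range_ite (X · ω) (hτN ω)

theorem IsStoppingTime.measurableSet_lt_natCast {ℱ : Filtration ℕ m0} {τ : Ω → ℕ}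
    (hτ : IsStoppingTime ℱ (fun ω => (τ ω : WithTop ℕ))) (s : ℕ) :
    MeasurableSet[ℱ s] {ω | s < τ ω} := by
  simpa using hτ.measurableSet_gt s

theorem integral_natCast_eq_sum_measureReal [IsFiniteMeasure μ] {τ : Ω → ℕ} {N : ℕ}
    (hτN : ∀ ω, τ ω ≤ N) (hτ : ∀ s, MeasurableSet {ω | s < τ ω}) :
    Integrable (fun ω => (τ ω : ℝ)) μ ∧
      ∫ ω, (τ ω : ℝ) ∂μ = ∑ s ∈ range N, μ.real {ω | s < τ ω} := by
  have hrep ω : (τ ω : ℝ) = ∑ s ∈ range N, {ω | s < τ ω}.indicator (fun _ => (1 : ℝ)) ω := by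
    simpa using sum_range_stopped_eq_sum_indicator hτN (fun _ _ => (1 : ℝ)) ω
  have hint s : Integrable ({ω | s < τ ω}.indicator (fun _ => (1 : ℝ))) μ :=
    (integrable_const 1).indicator (hτ s)
  simp_rw [hrep]
  refine ⟨integrable_finsetSum _ fun s _ => hint s, ?_⟩
  rw [integral_finsetSum _ fun s _ => hint s]
  simp [integral_indicator_const _ (hτ _)]

theorem setIntegral_le_of_condExp_le [IsFiniteMeasure μ] (hm : m ≤ m0) {f : Ω → ℝ} {A : Set Ω}
    {c : ℝ} (hA : MeasurableSet[m] A) (hf : Integrable f μ) (hfc : ∀ᵐ ω ∂μ, μ[f|m] ω ≤ c) :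
    ∫ ω in A, f ω ∂μ ≤ c * μ.real A := by
  rw [← setIntegral_condExp hm hf hA, mul_comm, ← smul_eq_mul, ← setIntegral_const]
  exact setIntegral_mono_ae integrable_condExp.integrableOn integrableOn_const hfc

section NormedGroup

variable {E : Type*} [NormedAddCommGroup E]

theorem memLp_sum_range_stopped {ℱ : Filtration ℕ m0} {X : ℕ → Ω → E}
    (hX2 : ∀ s, MemLp (X s) 2 μ) {τ : Ω → ℕ} (hτ : IsStoppingTime ℱ (fun ω => (τ ω : WithTop ℕ)))
    {N : ℕ} (hτN : ∀ ω, τ ω ≤ N) :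
    MemLp (fun ω => ∑ s ∈ range (τ ω), X s ω) 2 μ := by
  simp_rw [sum_range_stopped_eq_sum_indicator hτN X]
  exact memLp_finsetSum (range N) fun s _ =>
    (hX2 s).indicator (ℱ.le s _ (hτ.measurableSet_lt_natCast s))

theorem integral_norm_sq_indicator_le [IsFiniteMeasure μ] {ℱ : Filtration ℕ m0}
    {X : ℕ → Ω → E} {σ : ℝ} (hX2 : ∀ s, MemLp (X s) 2 μ)
    (hvar : ∀ s, ∀ᵐ ω ∂μ, μ[fun ω => ‖X s ω‖ ^ 2|ℱ s] ω ≤ σ ^ 2) {A : ℕ → Set Ω}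
    (hA : ∀ s, MeasurableSet[ℱ s] (A s)) (s : ℕ) :
    ∫ ω, ‖(A s).indicator (X s) ω‖ ^ 2 ∂μ ≤ σ ^ 2 * μ.real (A s) := by
  have hsq : (fun ω => ‖(A s).indicator (X s) ω‖ ^ 2) = (A s).indicator (‖X s ·‖ ^ 2) := by
    ext ω
    by_cases hω : ω ∈ A s <;> simp [hω]
  rw [hsq, integral_indicator (ℱ.le s _ (hA s))]
  exact setIntegral_le_of_condExp_le (ℱ.le s) (hA s) ((hX2 s).integrable_norm_pow two_ne_zero)
    (hvar s)

end NormedGroup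

section InnerProductSpace

variable {E : Type*} [NormedAddCommGroup E] [InnerProductSpace ℝ E]

theorem MemLp.integrable_inner {f g : Ω → E} (hf : MemLp f 2 μ) (hg : MemLp g 2 μ) :
    Integrable (fun ω => ⟪f ω, g ω⟫) μ :=
  (L2.integrable_inner (𝕜 := ℝ) (hf.toLp f) (hg.toLp g)).congr <| by
    filter_upwards [hf.coeFn_toLp, hg.coeFn_toLp] with ω hfω hgω
    rw [hfω, hgω]

theorem integral_norm_sq_sum_of_pairwise_orthogonal {ι : Type*} {Y : ι → Ω → E}
    (hY : ∀ i, MemLp (Y i) 2 μ)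
    (horth : Pairwise fun i j => ∫ ω, ⟪Y i ω, Y j ω⟫ ∂μ = 0) (S : Finset ι) :
    ∫ ω, ‖∑ i ∈ S, Y i ω‖ ^ 2 ∂μ = ∑ i ∈ S, ∫ ω, ‖Y i ω‖ ^ 2 ∂μ := by
  have hint i j : Integrable (fun ω => ⟪Y i ω, Y j ω⟫) μ := (hY i).integrable_inner (hY j)
  simp_rw [← real_inner_self_eq_norm_sq, sum_inner, inner_sum]
  rw [integral_finsetSum _ fun i _ => integrable_finsetSum _ fun j _ => hint i j]
  refine sum_congr rfl fun i hi => ?_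
  rw [integral_finsetSum _ fun j _ => hint i j]
  exact sum_eq_single_of_mem i hi fun j _ hji => horth hji.symm

variable [CompleteSpace E] [IsFiniteMeasure μ]

theorem integral_inner_eq_zero_of_condExp_eq_zero (hm : m ≤ m0) {u v : Ω → E}
    (hu : StronglyMeasurable[m] u) (hu2 : MemLp u 2 μ) (hv2 : MemLp v 2 μ)
    (hv : μ[v|m] =ᵐ[μ] 0) :
    ∫ ω, ⟪u ω, v ω⟫ ∂μ = 0 := by
  have hpull : μ[fun ω => ⟪u ω, v ω⟫|m] =ᵐ[μ] fun ω => ⟪u ω, μ[v|m] ω⟫ :=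
    condExp_bilin_of_stronglyMeasurable_left (innerSL ℝ) hu (hu2.integrable_inner hv2)
      (hv2.integrable one_le_two)
  rw [← integral_condExp hm, integral_congr_ae hpull]
  refine integral_eq_zero_of_ae ?_
  filter_upwards [hv] with ω hω
  simp [hω]

variable {ℱ : Filtration ℕ m0} {X : ℕ → Ω → E}

theorem integral_inner_indicator_eq_zero (hX : ∀ s, StronglyMeasurable[ℱ (s + 1)] (X s))
    (hX2 : ∀ s, MemLp (X s) 2 μ) (hmean : ∀ s, μ[X s|ℱ s] =ᵐ[μ] 0) {A : ℕ → Set Ω}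
    (hA : ∀ s, MeasurableSet[ℱ s] (A s)) {s t : ℕ} (hst : s < t) :
    ∫ ω, ⟪(A s).indicator (X s) ω, (A t).indicator (X t) ω⟫ ∂μ = 0 := by
  have hA0 r : MeasurableSet (A r) := ℱ.le r _ (hA r)
  have hu : StronglyMeasurable[ℱ t] ((A t).indicator ((A s).indicator (X s))) :=
    (((hX s).mono (ℱ.mono hst)).indicator (ℱ.mono hst.le _ (hA s))).indicator (hA t)
  rw [← integral_inner_eq_zero_of_condExp_eq_zero (ℱ.le t) hu
    (((hX2 s).indicator (hA0 s)).indicator (hA0 t)) (hX2 t) (hmean t)]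
  congr 1 with ω
  by_cases hω : ω ∈ A t <;> simp [hω]

theorem integral_norm_sq_sum_range_stopped_le {σ : ℝ}
    (hX : ∀ s, StronglyMeasurable[ℱ (s + 1)] (X s)) (hX2 : ∀ s, MemLp (X s) 2 μ)
    (hmean : ∀ s, μ[X s|ℱ s] =ᵐ[μ] 0)
    (hvar : ∀ s, ∀ᵐ ω ∂μ, μ[fun ω => ‖X s ω‖ ^ 2|ℱ s] ω ≤ σ ^ 2)
    {τ : Ω → ℕ} (hτ : IsStoppingTime ℱ (fun ω => (τ ω : WithTop ℕ))) {N : ℕ}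
    (hτN : ∀ ω, τ ω ≤ N) :
    ∫ ω, ‖∑ s ∈ range (τ ω), X s ω‖ ^ 2 ∂μ ≤ σ ^ 2 * ∫ ω, (τ ω : ℝ) ∂μ := by
  have hA := hτ.measurableSet_lt_natCast
  have horth : Pairwise fun s t =>
      ∫ ω, ⟪{ω | s < τ ω}.indicator (X s) ω, {ω | t < τ ω}.indicator (X t) ω⟫ ∂μ = 0 := by
    intro s t hst
    rcases hst.lt_or_gt with hst | hts
    · exact integral_inner_indicator_eq_zero hX hX2 hmean hA hst
    · rw [← integral_inner_indicator_eq_zero hX hX2 hmean hA hts]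
      congr 1 with ω
      exact real_inner_comm _ _
  simp_rw [sum_range_stopped_eq_sum_indicator hτN X]
  rw [integral_norm_sq_sum_of_pairwise_orthogonal
      (Y := fun s => {ω | s < τ ω}.indicator (X s))
      (fun s => (hX2 s).indicator (ℱ.le s _ (hA s))) horth,
    (integral_natCast_eq_sum_measureReal hτN fun s => ℱ.le s _ (hA s)).2, mul_sum]
  exact sum_le_sum fun s _ => integral_norm_sq_indicator_le hX2 hvar hA s

end InnerProductSpace

end MeasureTheory

theorem stmt_11_general {Ω : Type*} {m0 : MeasurableSpace Ω} (P : Measure Ω) [IsProbabilityMeasure P]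
    {d : ℕ} (f : EuclideanSpace ℝ (Fin d) → ℝ)
    (θ : EuclideanSpace ℝ (Fin d))
    (ℱ : Filtration ℕ m0)
    (gs : ℕ → Ω → EuclideanSpace ℝ (Fin d))
    (hadapted : Adapted ℱ gs)
    (hint : ∀ s, MemLp (gs s) 2 P)
    (hmean : ∀ s, P[gs (s + 1) | ℱ s] =ᵐ[P] fun _ => gradient f θ)
    (σ : ℝ)
    (hvar : ∀ s, ∀ᵐ ω ∂P, (P[(fun ω' => ‖gs (s + 1) ω' - gradient f θ‖ ^ 2) | ℱ s]) ω ≤ σ ^ 2)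
    (b : Ω → ℕ) (hb : IsStoppingTime ℱ (fun ω => (b ω : WithTop ℕ)))
    (bmax : ℕ) (hbmax : ∀ ω, b ω ≤ bmax)
    (g : Ω → EuclideanSpace ℝ (Fin d))
    (hg : ∀ ω, g ω = ((b ω : ℝ))⁻¹ • ∑ s ∈ Finset.range (b ω), gs (s + 1) ω) :
    ∫ ω, ((b ω : ℝ)) ^ 2 * ‖g ω‖ ^ 2 ∂P
      ≤ 2 * bmax * ∫ ω, (b ω : ℝ) * ‖gradient f θ‖ ^ 2 ∂P
        + 2 * σ ^ 2 * ∫ ω, (b ω : ℝ) ∂P := by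
  set c := gradient f θ
  set X : ℕ → Ω → EuclideanSpace ℝ (Fin d) := fun s => gs (s + 1) - fun _ => c
  have hX s : StronglyMeasurable[ℱ (s + 1)] (X s) :=
    ((hadapted (s + 1)).sub measurable_const).stronglyMeasurable
  have hX2 s : MemLp (X s) 2 P := (hint (s + 1)).sub (memLp_const c)
  have hXmean s : P[X s|ℱ s] =ᵐ[P] 0 := by
    filter_upwards [condExp_sub ((hint (s + 1)).integrable one_le_two) (integrable_const c) (ℱ s),
      hmean s] with ω hsub hmeanω
    simp [X, hsub, hmeanω, condExp_const (ℱ.le s)]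
  have hS := integral_norm_sq_sum_range_stopped_le hX hX2 hXmean hvar hb hbmax
  have hS_int := (memLp_sum_range_stopped hX2 hb hbmax).integrable_norm_pow two_ne_zero
  have hb_int := (integral_natCast_eq_sum_measureReal (μ := P) hbmax
    fun s => ℱ.le s _ (hb.measurableSet_lt_natCast s)).1
  calc ∫ ω, (b ω : ℝ) ^ 2 * ‖g ω‖ ^ 2 ∂P
      ≤ ∫ ω, (2 * ‖∑ s ∈ range (b ω), X s ω‖ ^ 2 + 2 * bmax * (b ω * ‖c‖ ^ 2)) ∂P := by
        refine integral_mono_of_nonneg (ae_of_all _ fun ω => by positivity)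
          ((hS_int.const_mul 2).add ((hb_int.mul_const _).const_mul _)) (ae_of_all _ fun ω => ?_)
        simpa [hg ω, X] using sq_mul_norm_sq_average_le (fun s => gs (s + 1) ω) c (hbmax ω)
    _ = 2 * ∫ ω, ‖∑ s ∈ range (b ω), X s ω‖ ^ 2 ∂P + 2 * bmax * ∫ ω, b ω * ‖c‖ ^ 2 ∂P := by
        rw [integral_add (hS_int.const_mul 2) ((hb_int.mul_const _).const_mul _),
          integral_const_mul, integral_const_mul]
    _ ≤ _ := by linarith

theorem stmt_11 {Ω : Type*} {m0 : MeasurableSpace Ω} (P : Measure Ω) [IsProbabilityMeasure P]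
    {d : ℕ} (f : EuclideanSpace ℝ (Fin d) → ℝ) (hdiff : Differentiable ℝ f)
    (θ : EuclideanSpace ℝ (Fin d))
    (ℱ : Filtration ℕ m0)
    (gs : ℕ → Ω → EuclideanSpace ℝ (Fin d))
    (hadapted : Adapted ℱ gs)
    (hint : ∀ s, MemLp (gs s) 2 P)
    (hmean : ∀ s, P[gs (s + 1) | ℱ s] =ᵐ[P] fun _ => gradient f θ)
    (σ : ℝ)
    (hvar : ∀ s, ∀ᵐ ω ∂P, (P[(fun ω' => ‖gs (s + 1) ω' - gradient f θ‖ ^ 2) | ℱ s]) ω ≤ σ ^ 2)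
    (b : Ω → ℕ) (hb : IsStoppingTime ℱ (fun ω => (b ω : WithTop ℕ)))
    (bmax : ℕ) (hbmax : ∀ ω, b ω ≤ bmax)
    (g : Ω → EuclideanSpace ℝ (Fin d))
    (hg : ∀ ω, g ω = ((b ω : ℝ))⁻¹ • ∑ s ∈ Finset.range (b ω), gs (s + 1) ω) :
    ∫ ω, ((b ω : ℝ)) ^ 2 * ‖g ω‖ ^ 2 ∂P
      ≤ 2 * bmax * ∫ ω, (b ω : ℝ) * ‖gradient f θ‖ ^ 2 ∂P
        + 2 * σ ^ 2 * ∫ ω, (b ω : ℝ) ∂P :=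
  stmt_11_general P f θ ℱ gs hadapted hint hmean σ hvar b hb bmax hbmax g hg
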